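/- arXiv:1904.08914 — 4 statements merged into one kernel-verified Lean document; each statement's English description precedes it below -/
import Mathlib

section
/- Let p be a real polynomial with |p(x)| ≤ 1 for all x ∈ [-1,1]. Then for all real x with 1 ≤ x ≤ 1 + μ (μ ≥ 0), we have |p(x)| ≤ exp(2·deg(p)·√(2μ + μ²)). -/
/-!
On `[1, ∞)` a polynomial of degree `n` bounded by `1` on `[-1, 1]` is dominated in absolute value
by the Chebyshev polynomial `T n` (Lagrange interpolation at the Chebyshev nodes). Writing
`x = cosh θ` gives `T n x = cosh (n θ) ≤ exp (n θ)`, and `θ = arcosh x = log (x + √(x² - 1))`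
is at most `2 √(x² - 1)` because `x - 1 ≤ √(x² - 1)`.
-/

open Polynomial Polynomial.Chebyshev Real

theorem Polynomial.Chebyshev.abs_eval_le_eval_T_real_of_forall_abs_le_one {n : ℕ} {P : ℝ[X]}
    {x : ℝ} (hx : 1 ≤ x) (hPdeg : P.degree ≤ n)
    (hPbnd : ∀ y ∈ Set.Icc (-1 : ℝ) 1, |P.eval y| ≤ 1) :
    |P.eval x| ≤ (T ℝ n).eval x := by
  have hle := eval_iterate_derivative_le_of_forall_abs_le_one (k := 0) hx hPdeg hPbnd
  have hneg := eval_iterate_derivative_le_of_forall_abs_le_one (k := 0) hx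
    (P := -P) (by rwa [degree_neg]) (by simpa only [eval_neg, abs_neg] using hPbnd)
  simp only [Function.iterate_zero, id, eval_neg] at hle hneg
  exact abs_le.2 ⟨by linarith, hle⟩

theorem Real.cosh_le_exp_of_nonneg {θ : ℝ} (hθ : 0 ≤ θ) : cosh θ ≤ exp θ := by
  rw [cosh_eq]
  linarith [exp_le_exp.2 (show -θ ≤ θ by linarith)]

theorem Polynomial.Chebyshev.eval_T_real_le_exp_mul_arcosh (n : ℕ) {x : ℝ} (hx : 1 ≤ x) :
    (T ℝ n).eval x ≤ exp (n * arcosh x) := by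
  conv_lhs => rw [← cosh_arcosh hx, T_real_cosh]
  exact cosh_le_exp_of_nonneg (mod_cast mul_nonneg n.cast_nonneg (arcosh_nonneg hx))

theorem Real.arcosh_le_two_mul_sqrt_sq_sub_one {x : ℝ} (hx : 1 ≤ x) :
    arcosh x ≤ 2 * √(x ^ 2 - 1) := by
  have hsub : x - 1 ≤ √(x ^ 2 - 1) := le_sqrt_of_sq_le (by nlinarith)
  rw [← exp_le_exp, exp_arcosh hx]
  linarith [add_one_le_exp (2 * √(x ^ 2 - 1))]

theorem paturi_growth_bound_general (p : Polynomial ℝ)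
    (hb : ∀ x ∈ Set.Icc (-1 : ℝ) 1, |p.eval x| ≤ 1)
    (μ : ℝ) (x : ℝ) (hx1 : 1 ≤ x) (hx2 : x ≤ 1 + μ) :
    |p.eval x| ≤ Real.exp (2 * (p.natDegree : ℝ) * Real.sqrt (2 * μ + μ ^ 2)) := by
  have hsqrt : √(x ^ 2 - 1) ≤ √(2 * μ + μ ^ 2) := sqrt_le_sqrt (by nlinarith)
  calc |p.eval x| ≤ (T ℝ p.natDegree).eval x :=
        abs_eval_le_eval_T_real_of_forall_abs_le_one hx1 degree_le_natDegree hb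
    _ ≤ exp (p.natDegree * arcosh x) := eval_T_real_le_exp_mul_arcosh _ hx1
    _ ≤ exp (2 * p.natDegree * √(2 * μ + μ ^ 2)) := by
        rw [exp_le_exp, mul_comm 2, mul_assoc]
        gcongr
        exact (arcosh_le_two_mul_sqrt_sq_sub_one hx1).trans (by gcongr)

/-- Paturi's lemma: if `|p(x)| ≤ 1` on `[-1,1]`, then for `1 ≤ x ≤ 1 + μ`,
`|p(x)| ≤ exp(2 deg(p) √(2μ + μ²))`. -/
theorem paturi_growth_bound (p : Polynomial ℝ)
    (hb : ∀ x ∈ Set.Icc (-1 : ℝ) 1, |p.eval x| ≤ 1)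
    (μ : ℝ) (hμ : 0 ≤ μ) (x : ℝ) (hx1 : 1 ≤ x) (hx2 : x ≤ 1 + μ) :
    |p.eval x| ≤ Real.exp (2 * (p.natDegree : ℝ) * Real.sqrt (2 * μ + μ ^ 2)) :=
  paturi_growth_bound_general p hb μ x hx1 hx2
end

section
/- Let p be a real polynomial of degree d, and suppose max_{x,y ∈ [a,b]} |p(x) - p(y)| ≥ H for reals a < b and H > 0. Let ε ≤ 1/(100 d²) and a' = a + ε(b - a). Then max_{x,y ∈ [a',b]} |p(x) - p(y)| ≥ H/2. -/
/-!
Let `a' = a + ε (b - a)` and suppose the range of `p` on `[a', b]` is shorter than `H / 2`, so that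
`|p - c| < H / 4` there for the midpoint `c` of that range. Rescaling `[a', b]` affinely onto
`[-1, 1]`, with `a' ↦ 1`, turns `(p - c) / (H / 4)` into a polynomial of degree `≤ d` bounded by `1`
on `[-1, 1]`. Chebyshev's extremal property bounds such a polynomial at `x ≥ 1` by `T_d x`, and
writing `x = cosh θ`, `T_d x = cosh (d θ) ≤ exp (d² θ² / 2) ≤ exp (d² (x - 1))` (Paturi's bound).
The points of `[a, a']` correspond to `x ≤ 1 + 2ε / (1 - ε)`, where this is at most
`exp (2 / 99) < 2`. Hence `|p - c| < H / 2` on all of `[a, b]`, contradicting a range `≥ H`.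
-/

open Polynomial Real

theorem Real.one_add_sq_div_two_le_cosh (x : ℝ) : 1 + x ^ 2 / 2 ≤ cosh x := by
  have hsinh : (x / 2) ^ 2 ≤ sinh (x / 2) ^ 2 := by
    rw [← sq_abs, ← sq_abs (sinh _), abs_sinh]
    gcongr
    exact self_le_sinh_iff.2 (abs_nonneg _)
  have hcosh := cosh_two_mul (x / 2)
  rw [mul_div_cancel₀ x two_ne_zero, cosh_sq] at hcosh
  linarith

namespace Polynomial.Chebyshev

theorem eval_T_real_le_exp (n : ℤ) {x : ℝ} (hx : 1 ≤ x) :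
    (T ℝ n).eval x ≤ exp (n ^ 2 * (x - 1)) := by
  set θ := arcosh x
  have hθ : cosh θ = x := cosh_arcosh hx
  calc (T ℝ n).eval x = cosh (n * θ) := by rw [← hθ, T_real_cosh]
    _ ≤ exp ((n * θ) ^ 2 / 2) := cosh_le_exp_half_sq _
    _ ≤ exp (n ^ 2 * (x - 1)) := by
        gcongr
        have := one_add_sq_div_two_le_cosh θ
        nlinarith [sq_nonneg (n : ℝ)]

theorem abs_eval_le_eval_T_of_forall_abs_le_one {n : ℕ} {P : ℝ[X]} (hPdeg : P.degree ≤ n)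
    (hPbnd : ∀ x ∈ Set.Icc (-1) 1, |P.eval x| ≤ 1) {x : ℝ} (hx : 1 ≤ x) :
    |P.eval x| ≤ (T ℝ n).eval x := by
  refine abs_le'.2 ⟨eval_iterate_derivative_le_of_forall_abs_le_one (k := 0) hx hPdeg hPbnd, ?_⟩
  simpa using eval_iterate_derivative_le_of_forall_abs_le_one (k := 0) hx
    (P := -P) (by rwa [degree_neg]) (by simpa using hPbnd)

end Polynomial.Chebyshev

theorem IsCompact.exists_forall_abs_sub_lt_half {α : Type*} [TopologicalSpace α] {s : Set α}
    (hs : IsCompact s) {f : α → ℝ} (hf : ContinuousOn f s) {δ : ℝ}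
    (h : ∀ x ∈ s, ∀ y ∈ s, |f x - f y| < δ) : ∃ c, ∀ z ∈ s, |f z - c| < δ / 2 := by
  rcases s.eq_empty_or_nonempty with rfl | hne
  · exact ⟨0, by simp⟩
  obtain ⟨xmax, hxmax, hmax⟩ := hs.exists_isMaxOn hne hf
  obtain ⟨xmin, hxmin, hmin⟩ := hs.exists_isMinOn hne hf
  refine ⟨(f xmax + f xmin) / 2, fun z hz => ?_⟩
  have hosc := (abs_lt.1 (h xmax hxmax xmin hxmin)).2
  have hzmax : f z ≤ f xmax := hmax hz
  have hzmin : f xmin ≤ f z := hmin hz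
  rw [abs_lt]
  constructor <;> linarith

namespace Polynomial

theorem abs_eval_le_exp_of_forall_abs_le_one {n : ℕ} {P : ℝ[X]} (hPdeg : P.natDegree ≤ n)
    (hPbnd : ∀ x ∈ Set.Icc (-1) 1, |P.eval x| ≤ 1) {x : ℝ} (hx : 1 ≤ x) :
    |P.eval x| ≤ exp (n ^ 2 * (x - 1)) :=
  (Chebyshev.abs_eval_le_eval_T_of_forall_abs_le_one (degree_le_of_natDegree_le hPdeg) hPbnd
    hx).trans (by simpa using Chebyshev.eval_T_real_le_exp n hx)

theorem abs_eval_le_mul_exp_of_forall_abs_eval_le {p : ℝ[X]} {n : ℕ} (hp : p.natDegree ≤ n)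
    {a b r : ℝ} (hab : a < b) (hr : 0 < r) (hbnd : ∀ z ∈ Set.Icc a b, |p.eval z| ≤ r)
    {z : ℝ} (hz : z ≤ a) :
    |p.eval z| ≤ r * exp (n ^ 2 * (2 * (a - z) / (b - a))) := by
  have hba : 0 < b - a := sub_pos.2 hab
  set φ : ℝ[X] := C (-(b - a) / 2) * X + C ((a + b) / 2)
  have hφ (u : ℝ) : φ.eval u = (a + b) / 2 - (b - a) / 2 * u := by simp [φ]; ring
  set q : ℝ[X] := C r⁻¹ * p.comp φ
  have hq (u : ℝ) : q.eval u = p.eval (φ.eval u) / r := by simp [q, div_eq_inv_mul]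
  have hqdeg : q.natDegree ≤ n := calc
    q.natDegree ≤ p.natDegree * φ.natDegree := (natDegree_C_mul_le _ _).trans natDegree_comp_le
    _ ≤ n * 1 := Nat.mul_le_mul hp natDegree_linear_le
    _ = n := mul_one n
  have hqbnd : ∀ u ∈ Set.Icc (-1) 1, |q.eval u| ≤ 1 := by
    rintro u ⟨hu₁, hu₂⟩
    rw [hq, abs_div, abs_of_pos hr, div_le_one hr]
    exact hbnd _ ⟨by rw [hφ]; nlinarith, by rw [hφ]; nlinarith⟩
  have hu : φ.eval (1 + 2 * (a - z) / (b - a)) = z := by rw [hφ]; field_simp; ring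
  have hu₁ : 1 ≤ 1 + 2 * (a - z) / (b - a) :=
    le_add_of_nonneg_right (by have := sub_nonneg.2 hz; positivity)
  have := abs_eval_le_exp_of_forall_abs_le_one hqdeg hqbnd hu₁
  rwa [hq, hu, abs_div, abs_of_pos hr, div_le_iff₀ hr, add_sub_cancel_left, mul_comm] at this

theorem abs_eval_lt_two_mul_of_forall_abs_eval_le {p : ℝ[X]} {n : ℕ} (hp : p.natDegree ≤ n)
    {a b r ε : ℝ} (hab : a < b) (hr : 0 < r) (hnε : (n : ℝ) ^ 2 * ε ≤ 1 / 100) (hε : ε ≤ 1 / 100)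
    (hbnd : ∀ z ∈ Set.Icc (a + ε * (b - a)) b, |p.eval z| ≤ r) :
    ∀ z ∈ Set.Icc a b, |p.eval z| < 2 * r := by
  set a' := a + ε * (b - a)
  have hba : 0 < b - a := sub_pos.2 hab
  have ha'b : a' < b := by nlinarith
  rintro z ⟨hz₁, hz₂⟩
  rcases le_total a' z with hz | hz
  · linarith [hbnd z ⟨hz, hz₂⟩]
  have hexponent : (n : ℝ) ^ 2 * (2 * (a' - z) / (b - a')) ≤ 2 / 99 := by
    have hza : a' - z ≤ ε * (b - a) := by linarith
    rw [mul_div_assoc', div_le_iff₀ (sub_pos.2 ha'b)]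
    nlinarith [mul_le_mul_of_nonneg_left hza (sq_nonneg (n : ℝ)),
      mul_le_mul_of_nonneg_right hnε hba.le, mul_le_mul_of_nonneg_right hε hba.le]
  have hexp : exp (2 / 99) < 2 :=
    (exp_bound_div_one_sub_of_interval' (by norm_num) (by norm_num)).trans (by norm_num)
  calc |p.eval z| ≤ r * exp ((n : ℝ) ^ 2 * (2 * (a' - z) / (b - a'))) :=
        abs_eval_le_mul_exp_of_forall_abs_eval_le hp ha'b hr hbnd hz
    _ ≤ r * exp (2 / 99) := by gcongr
    _ < 2 * r := by nlinarith

end Polynomial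

theorem range_shrink_bound_general (p : Polynomial ℝ) (d : ℕ) (hd : p.natDegree = d)
    (a b H ε : ℝ) (hab : a < b) (hH : 0 < H)
    (hmax : ∃ x ∈ Set.Icc a b, ∃ y ∈ Set.Icc a b, |p.eval x - p.eval y| ≥ H)
    (hε : ε ≤ 1 / (100 * (d : ℝ) ^ 2)) :
    ∃ x ∈ Set.Icc (a + ε * (b - a)) b, ∃ y ∈ Set.Icc (a + ε * (b - a)) b,
      |p.eval x - p.eval y| ≥ H / 2 := by
  have hdε : (d : ℝ) ^ 2 * ε ≤ 1 / 100 ∧ ε ≤ 1 / 100 := by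
    rcases Nat.eq_zero_or_pos d with rfl | hd₀
    · norm_num at hε
      constructor <;> linarith
    have hd₁ : (1 : ℝ) ≤ d ^ 2 := one_le_pow₀ (by exact_mod_cast hd₀)
    constructor
    · calc (d : ℝ) ^ 2 * ε ≤ d ^ 2 * (1 / (100 * d ^ 2)) := by gcongr
        _ = 1 / 100 := by field_simp
    · exact hε.trans (by gcongr; linarith)
  by_contra! hosc
  obtain ⟨c, hc⟩ := isCompact_Icc.exists_forall_abs_sub_lt_half p.continuous.continuousOn hosc
  have hpc : ∀ z ∈ Set.Icc a b, |(p - C c).eval z| < 2 * (H / 4) :=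
    abs_eval_lt_two_mul_of_forall_abs_eval_le (natDegree_sub_C.le.trans hd.le) hab
      (by positivity) hdε.1 hdε.2 fun w hw => by rw [eval_sub, eval_C]; linarith [hc w hw]
  obtain ⟨x, hx, y, hy, hxy⟩ := hmax
  have hxc := hpc x hx
  have hyc := hpc y hy
  rw [eval_sub, eval_C] at hxc hyc
  linarith [abs_sub_le (p.eval x) c (p.eval y), abs_sub_comm c (p.eval y)]

/-- Slightly shrinking the domain of a degree-`d` polynomial only modestly
shrinks its range: if the variation of `p` on `[a,b]` is at least `H`,
`ε ≤ 1/(100 d²)` and `a' = a + ε(b-a)`, then the variation of `p` on `[a',b]`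
is at least `H/2`. -/
theorem range_shrink_bound (p : Polynomial ℝ) (d : ℕ) (hd : p.natDegree = d)
    (a b H ε : ℝ) (hab : a < b) (hH : 0 < H)
    (hmax : ∃ x ∈ Set.Icc a b, ∃ y ∈ Set.Icc a b, |p.eval x - p.eval y| ≥ H)
    (hε0 : 0 ≤ ε) (hε : ε ≤ 1 / (100 * (d : ℝ) ^ 2)) :
    ∃ x ∈ Set.Icc (a + ε * (b - a)) b, ∃ y ∈ Set.Icc (a + ε * (b - a)) b,
      |p.eval x - p.eval y| ≥ H / 2 :=
  range_shrink_bound_general p d hd a b H ε hab hH hmax hε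
end

section
/- Let p be a real polynomial of degree at most √k, and let 0 = z₁ < z₂ < ... < z_M = k be points with z_{i+1} - z_i ≤ 1 for all i. If max_{x,y ∈ [0,k]} |p(x) - p(y)| ≥ H, then max_{i,j} |p(z_i) - p(z_j)| ≥ H/2. -/
/-!
Let `B` be half the oscillation of `p` on `[0, k]`. Since `deg p ≤ √k`, Markov-type inequalities
give `|p''| ≤ 4B` on the whole interval: near an endpoint from V. A. Markov's bound
`|q''(1)| ≤ n²(n² - 1)/3 · max_{[-1,1]} |q|` applied on the longer side, and in the middle from
the first Markov inequality applied to the even part of `p` around the point. At an interior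
maximum `w` of `p` we have `p'(w) = 0`, and some grid point lies within `1/2` of `w`, so `p` drops
by at most `4B · (1/2)² / 2 = B/2` from `w` to it; the same holds at the minimum, so the grid
values still spread over at least `2B - B = B`.
-/

open Polynomial Set

namespace Polynomial

theorem abs_iterate_derivative_eval_one_le {P : ℝ[X]} {n k : ℕ} {B : ℝ} (hP : P.natDegree ≤ n)
    (hB : ∀ x ∈ Icc (-1 : ℝ) 1, |P.eval x| ≤ B) :
    |(derivative^[k] P).eval 1| ≤ B * (derivative^[k] (Chebyshev.T ℝ n)).eval 1 := by
  obtain hB0 | hB0 := (abs_nonneg _ |>.trans (hB 1 ⟨by norm_num, le_rfl⟩)).eq_or_lt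
  · have hP0 : P = 0 := eq_zero_of_infinite_isRoot P <|
      (Icc_infinite (by norm_num : (-1 : ℝ) < 1)).mono fun x hx => abs_nonpos_iff.mp (hB0 ▸ hB x hx)
    simp [hP0, ← hB0]
  have markov : ∀ Q : ℝ[X], Q.natDegree ≤ n → (∀ x ∈ Icc (-1 : ℝ) 1, |Q.eval x| ≤ B) →
      (derivative^[k] Q).eval 1 ≤ B * (derivative^[k] (Chebyshev.T ℝ n)).eval 1 := by
    intro Q hQ hQB
    have h := Chebyshev.eval_iterate_derivative_le_of_forall_abs_le_one (k := k) le_rfl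
      (degree_le_of_natDegree_le ((natDegree_C_mul_le B⁻¹ Q).trans hQ)) fun x hx => by
        rw [eval_mul, eval_C, abs_mul, abs_inv, abs_of_pos hB0, inv_mul_le_one₀ hB0]
        exact hQB x hx
    rwa [iterate_derivative_C_mul, eval_mul, eval_C, inv_mul_le_iff₀ hB0] at h
  refine abs_le.mpr ⟨?_, markov P hP hB⟩
  have h := markov (-P) (by rwa [natDegree_neg]) (by simpa using hB)
  rw [iterate_derivative_neg, eval_neg] at h
  linarith

theorem iterate_derivative_comp_C_mul_X_add_C {R : Type*} [CommSemiring R] (q : R[X]) (s t : R)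
    (k : ℕ) : derivative^[k] (q.comp (C s * X + C t)) =
      C (s ^ k) * (derivative^[k] q).comp (C s * X + C t) := by
  induction k with
  | zero => simp
  | succ k ih =>
    rw [Function.iterate_succ_apply', ih, Function.iterate_succ_apply', derivative_C_mul,
      derivative_comp]
    simp only [derivative_add, derivative_C_mul, derivative_X, derivative_C, pow_succ, C_mul]
    ring

theorem iterate_derivative_taylor (q : ℝ[X]) (c : ℝ) (k : ℕ) :
    derivative^[k] (taylor c q) = taylor c (derivative^[k] q) := by
  simpa [taylor_apply] using iterate_derivative_comp_C_mul_X_add_C q 1 c k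

theorem abs_iterate_derivative_eval_le_of_affine {q : ℝ[X]} {n k : ℕ} {B s t : ℝ}
    (hq : q.natDegree ≤ n) (hB : ∀ x ∈ Icc (-1 : ℝ) 1, |q.eval (s * x + t)| ≤ B) :
    |s| ^ k * |(derivative^[k] q).eval (s + t)| ≤
      B * (derivative^[k] (Chebyshev.T ℝ n)).eval 1 := by
  have hdeg : (q.comp (C s * X + C t)).natDegree ≤ n :=
    natDegree_comp_le.trans <| (Nat.mul_le_mul hq natDegree_linear_le).trans (by simp)
  have h := abs_iterate_derivative_eval_one_le (k := k) hdeg (by simpa using hB)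
  simpa [iterate_derivative_comp_C_mul_X_add_C, eval_comp, abs_mul] using h

theorem abs_iterate_derivative_eval_endpoint_le {q : ℝ[X]} {n k : ℕ} {a b e B : ℝ}
    (hab : a ≤ b) (he : e = a ∨ e = b) (hq : q.natDegree ≤ n)
    (hB : ∀ x ∈ Icc a b, |q.eval x| ≤ B) :
    ((b - a) / 2) ^ k * |(derivative^[k] q).eval e| ≤
      B * (derivative^[k] (Chebyshev.T ℝ n)).eval 1 := by
  have hmap : ∀ s, |s| = (b - a) / 2 → ∀ x ∈ Icc (-1 : ℝ) 1,
      s * x + (a + b) / 2 ∈ Icc a b := by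
    intro s hs x hx
    have := abs_le.mp (abs_mul s x ▸ mul_le_of_le_one_right (abs_nonneg s) (abs_le.mpr hx))
    constructor <;> linarith
  obtain ⟨s, hs, rfl⟩ : ∃ s, |s| = (b - a) / 2 ∧ s + (a + b) / 2 = e := by
    rcases he with rfl | rfl
    · exact ⟨(e - b) / 2, by rw [abs_of_nonpos (by linarith)]; ring, by ring⟩
    · exact ⟨(e - a) / 2, abs_of_nonneg (by linarith), by ring⟩
  rw [← hs]
  exact abs_iterate_derivative_eval_le_of_affine hq fun x hx => hB _ (hmap s hs x hx)

theorem abs_derivative_eval_endpoint_le {q : ℝ[X]} {n : ℕ} {a b e B : ℝ} (hab : a ≤ b)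
    (he : e = a ∨ e = b) (hq : q.natDegree ≤ n) (hB : ∀ x ∈ Icc a b, |q.eval x| ≤ B) :
    (b - a) / 2 * |(derivative q).eval e| ≤ n ^ 2 * B := by
  have h := abs_iterate_derivative_eval_endpoint_le (k := 1) hab he hq hB
  simp only [Function.iterate_one, pow_one, Chebyshev.derivative_T_eval_one] at h
  push_cast at h
  linarith

theorem abs_iterate_derivative_two_eval_endpoint_le {q : ℝ[X]} {n : ℕ} {a b e B : ℝ}
    (hab : a ≤ b) (he : e = a ∨ e = b) (hq : q.natDegree ≤ n)
    (hB : ∀ x ∈ Icc a b, |q.eval x| ≤ B) :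
    3 * (b - a) ^ 2 * |(derivative^[2] q).eval e| ≤ 4 * (n ^ 2 * (n ^ 2 - 1)) * B := by
  have h := abs_iterate_derivative_eval_endpoint_le (k := 2) hab he hq hB
  have hT : 3 * (derivative^[2] (Chebyshev.T ℝ n)).eval 1 = n ^ 2 * (n ^ 2 - 1) := by
    simpa [Finset.prod_range_succ] using Chebyshev.iterate_derivative_T_eval_one (R := ℝ) n 2
  linear_combination 12 * h + 4 * B * hT

theorem coeff_comp_neg_X {R : Type*} [CommRing R] (r : R[X]) (j : ℕ) :
    (r.comp (-X)).coeff j = (-1) ^ j * r.coeff j := by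
  rw [show (-X : R[X]) = C (-1) * X by simp, comp_C_mul_X_coeff, mul_comm]

theorem exists_expand_two_eq_add_comp_neg_X {R : Type*} [CommRing R] (r : R[X]) :
    ∃ f : R[X], f.natDegree ≤ r.natDegree / 2 ∧ expand R 2 f = r + r.comp (-X) ∧
      (derivative f).eval 0 = (derivative^[2] r).eval 0 := by
  refine ⟨contract 2 (r + r.comp (-X)), ?_, ?_, ?_⟩
  · refine natDegree_le_iff_coeff_eq_zero.mpr fun j hj => ?_
    rw [coeff_contract two_ne_zero, coeff_add, coeff_comp_neg_X,
      coeff_eq_zero_of_natDegree_lt (by omega)]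
    simp
  · ext j
    rw [coeff_expand two_pos, coeff_contract two_ne_zero]
    split_ifs with h
    · rw [Nat.div_mul_cancel h]
    · rw [coeff_add, coeff_comp_neg_X, (Nat.odd_iff.mpr (Nat.two_dvd_ne_zero.mp h)).neg_one_pow]
      ring
  · rw [← coeff_zero_eq_eval_zero, ← coeff_zero_eq_eval_zero, coeff_derivative,
      coeff_contract two_ne_zero, coeff_iterate_derivative, coeff_add, coeff_comp_neg_X]
    norm_num [Nat.descFactorial, two_mul]

/-- `f(u) = q(c + √u) + q(c - √u)` is a polynomial of degree `≤ n/2`, bounded by `2B` on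
`[0, m²]`, with `f'(0) = q''(c)`; the first Markov inequality for `f` at `0` gives the bound. -/
theorem abs_iterate_derivative_two_eval_center_le {q : ℝ[X]} {n : ℕ} {c m B : ℝ} (hm : 0 < m)
    (hq : q.natDegree ≤ n) (hB : ∀ x ∈ Icc (c - m) (c + m), |q.eval x| ≤ B) :
    m ^ 2 * |(derivative^[2] q).eval c| ≤ n ^ 2 * B := by
  obtain ⟨f, hf_deg, hf_expand, hf_deriv⟩ := exists_expand_two_eq_add_comp_neg_X (taylor c q)
  have hf_bound : ∀ u ∈ Icc 0 (m ^ 2), |f.eval u| ≤ 2 * B := by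
    intro u ⟨hu0, hum⟩
    have hsqrt : √u ≤ m := Real.sqrt_le_iff.mpr ⟨hm.le, hum⟩
    have hfu : f.eval u = q.eval (√u + c) + q.eval (-√u + c) := by
      simpa [Real.sq_sqrt hu0, eval_comp, taylor_eval] using congr_arg (eval √u) hf_expand
    have := Real.sqrt_nonneg u
    rw [hfu]
    refine (abs_add_le _ _).trans ?_
    linarith [hB (√u + c) ⟨by linarith, by linarith⟩, hB (-√u + c) ⟨by linarith, by linarith⟩]
  have h := abs_derivative_eval_endpoint_le (by positivity) (Or.inl rfl)
    (hf_deg.trans (natDegree_taylor q c ▸ Nat.div_le_div_right hq)) hf_bound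
  rw [hf_deriv, iterate_derivative_taylor, taylor_eval, zero_add] at h
  have hn : ((n / 2 : ℕ) : ℝ) * 2 ≤ n := by exact_mod_cast Nat.div_mul_le_self n 2
  have hB0 : 0 ≤ B := (abs_nonneg _).trans (hB c ⟨by linarith, by linarith⟩)
  nlinarith [mul_le_mul hn hn (by positivity) (by positivity)]

theorem abs_iterate_derivative_two_eval_endpoint_le_four_mul {q : ℝ[X]} {n : ℕ} {a b e B : ℝ}
    (hn : 1 ≤ n) (hab : (n : ℝ) ^ 2 - n / 2 ≤ b - a) (he : e = a ∨ e = b)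
    (hq : q.natDegree ≤ n) (hB : ∀ x ∈ Icc a b, |q.eval x| ≤ B) :
    |(derivative^[2] q).eval e| ≤ 4 * B := by
  have hn' : (1 : ℝ) ≤ n := by exact_mod_cast hn
  have hba : 0 < b - a := by nlinarith
  have hlen : (n : ℝ) ^ 2 * (n ^ 2 - 1) ≤ 3 * (b - a) ^ 2 := by
    nlinarith [pow_le_pow_left₀ (by nlinarith) hab 2, sq_nonneg ((n : ℝ) - 3 / 4)]
  have h := abs_iterate_derivative_two_eval_endpoint_le (sub_pos.mp hba).le he hq hB
  have hB0 : 0 ≤ B := (abs_nonneg _).trans (hB a ⟨le_rfl, (sub_pos.mp hba).le⟩)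
  refine le_of_mul_le_mul_left ?_ (by positivity : 0 < 3 * (b - a) ^ 2)
  nlinarith [mul_le_mul_of_nonneg_right hlen hB0]

theorem abs_iterate_derivative_two_eval_le {q : ℝ[X]} {n : ℕ} {a b t B : ℝ}
    (hq : q.natDegree ≤ n) (hab : (n : ℝ) ^ 2 ≤ b - a) (hB : ∀ x ∈ Icc a b, |q.eval x| ≤ B)
    (ht : t ∈ Icc a b) : |(derivative^[2] q).eval t| ≤ 4 * B := by
  obtain hn | hn := Nat.lt_or_ge n 1
  · rw [iterate_derivative_eq_zero (by omega), eval_zero, abs_zero]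
    linarith [abs_nonneg _ |>.trans (hB t ht)]
  have hn' : (1 : ℝ) ≤ n := by exact_mod_cast hn
  by_cases hleft : t < a + n / 2
  · exact abs_iterate_derivative_two_eval_endpoint_le_four_mul hn (by linarith) (Or.inl rfl) hq
      fun x hx => hB x ⟨by linarith [hx.1, ht.1], hx.2⟩
  by_cases hright : b < t + n / 2
  · exact abs_iterate_derivative_two_eval_endpoint_le_four_mul hn (by linarith) (Or.inr rfl) hq
      fun x hx => hB x ⟨hx.1, by linarith [hx.2, ht.2]⟩
  have h := abs_iterate_derivative_two_eval_center_le (c := t) (m := n / 2) (by positivity) hq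
    fun x hx => hB x ⟨by linarith [hx.1], by linarith [hx.2]⟩
  refine le_of_mul_le_mul_left ?_ (by positivity : 0 < ((n : ℝ) / 2) ^ 2)
  linarith

/-- `x ↦ q(x) + S/2 · (x - w)²` is convex on `[a, b]` with a critical point at `w`. -/
theorem eval_le_eval_add_of_derivative_eval_eq_zero {q : ℝ[X]} {a b w S : ℝ}
    (hS : ∀ x ∈ Icc a b, -S ≤ (derivative^[2] q).eval x) (hw : w ∈ Ioo a b)
    (hw' : (derivative q).eval w = 0) {x : ℝ} (hx : x ∈ Icc a b) :
    q.eval w ≤ q.eval x + S / 2 * (x - w) ^ 2 := by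
  set g : ℝ[X] := q + C (S / 2) * (X - C w) ^ 2
  have hderiv : ∀ p : ℝ[X], _root_.deriv (fun y => p.eval y) = fun y => (derivative p).eval y :=
    fun p => by ext; exact p.deriv
  have hg : derivative^[2] g = derivative^[2] q + C S := by
    simp [g, derivative_pow, ← C_mul]
  have hconvex : ConvexOn ℝ (Icc a b) fun y => g.eval y := by
    refine convexOn_of_deriv2_nonneg (convex_Icc a b) g.continuousOn
      g.differentiable.differentiableOn
      (by rw [hderiv]; exact (derivative g).differentiable.differentiableOn) fun y hy => ?_
    simp only [Function.iterate_succ, Function.iterate_zero, Function.comp_apply, id, hderiv]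
    change 0 ≤ (derivative^[2] g).eval y
    rw [hg, eval_add, eval_C]
    linarith [hS y (interior_subset hy)]
  have hmin := hconvex.isMinOn_of_rightDeriv_eq_zero (by rwa [interior_Icc])
    (by rw [g.derivWithin (uniqueDiffWithinAt_Ioi w)]; simp [g, hw', derivative_pow])
  simpa [g] using hmin hx

end Polynomial

theorem monotoneOn_Icc_of_le_succ {α : Type*} [Preorder α] {f : ℕ → α} {a b : ℕ}
    (hf : ∀ i, a ≤ i → i < b → f i ≤ f (i + 1)) : MonotoneOn f (Icc a b) := by
  intro i hi j hj hij
  induction j, hij using Nat.le_induction with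
  | base => rfl
  | succ j hij ih =>
    exact (ih ⟨hi.1.trans hij, (Nat.le_succ j).trans hj.2⟩).trans (hf j (hi.1.trans hij) hj.2)

theorem exists_abs_sub_le_half_of_sub_le_one {M : ℕ} {z : ℕ → ℝ} (hM : 1 ≤ M)
    (hgap : ∀ i, 1 ≤ i → i < M → z (i + 1) - z i ≤ 1) {w : ℝ} (hw : w ∈ Icc (z 1) (z M)) :
    ∃ i ∈ Finset.Icc 1 M, |w - z i| ≤ 1 / 2 := by
  induction M, hM using Nat.le_induction generalizing w with
  | base => exact ⟨1, by simp, by norm_num [le_antisymm hw.2 hw.1]⟩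
  | succ M hM ih =>
    by_cases hwM : w ≤ z M
    · obtain ⟨i, hi, h⟩ := ih (fun i h1 h2 => hgap i h1 (by omega)) ⟨hw.1, hwM⟩
      exact ⟨i, Finset.Icc_subset_Icc_right (by omega) hi, h⟩
    have hstep := hgap M hM (by omega)
    by_cases hnear : w - z M ≤ 1 / 2
    · exact ⟨M, by simp; omega, by rw [abs_of_nonneg (by linarith)]; exact hnear⟩
    · exact ⟨M + 1, by simp, by rw [abs_of_nonpos (by linarith [hw.2])]; linarith⟩

section Grid

variable {q : ℝ[X]} {M : ℕ} {z : ℕ → ℝ} {S : ℝ} (hM : 1 ≤ M)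
  (hmono : ∀ i, 1 ≤ i → i < M → z i ≤ z (i + 1))
  (hgap : ∀ i, 1 ≤ i → i < M → z (i + 1) - z i ≤ 1)
  (hS : ∀ x ∈ Icc (z 1) (z M), |(derivative^[2] q).eval x| ≤ S)
include hM hmono hgap hS

theorem exists_eval_le_eval_grid_add_of_isMaxOn {w : ℝ} (hw : w ∈ Icc (z 1) (z M))
    (hmax : IsMaxOn (fun x => q.eval x) (Icc (z 1) (z M)) w) :
    ∃ i ∈ Finset.Icc 1 M, q.eval w ≤ q.eval (z i) + S / 8 := by
  have hS0 : 0 ≤ S := (abs_nonneg _).trans (hS w hw)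
  obtain rfl | hw1 := hw.1.eq_or_lt
  · exact ⟨1, by simp [hM], by linarith⟩
  obtain rfl | hwM := hw.2.eq_or_lt
  · exact ⟨M, by simp [hM], by linarith⟩
  have hderiv : (derivative q).eval w = 0 := by
    rw [← q.deriv]
    exact (hmax.isLocalMax (Icc_mem_nhds hw1 hwM)).deriv_eq_zero
  obtain ⟨i, hi, hwi⟩ := exists_abs_sub_le_half_of_sub_le_one hM hgap hw
  obtain ⟨hi1, hiM⟩ := Finset.mem_Icc.mp hi
  have hz := monotoneOn_Icc_of_le_succ hmono
  have hzi : z i ∈ Icc (z 1) (z M) :=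
    ⟨hz ⟨le_rfl, hM⟩ ⟨hi1, hiM⟩ hi1, hz ⟨hi1, hiM⟩ ⟨hM, le_rfl⟩ hiM⟩
  refine ⟨i, hi, (eval_le_eval_add_of_derivative_eval_eq_zero
    (fun x hx => neg_le_of_abs_le (hS x hx)) ⟨hw1, hwM⟩ hderiv hzi).trans ?_⟩
  have : (z i - w) ^ 2 ≤ 1 / 4 := by nlinarith [abs_le.mp hwi]
  nlinarith

theorem exists_eval_grid_sub_eval_grid_ge {wmax wmin : ℝ} (hwmax : wmax ∈ Icc (z 1) (z M))
    (hmax : IsMaxOn (fun x => q.eval x) (Icc (z 1) (z M)) wmax)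
    (hwmin : wmin ∈ Icc (z 1) (z M)) (hmin : IsMinOn (fun x => q.eval x) (Icc (z 1) (z M)) wmin) :
    ∃ i ∈ Finset.Icc 1 M, ∃ j ∈ Finset.Icc 1 M,
      q.eval wmax - q.eval wmin - S / 4 ≤ q.eval (z i) - q.eval (z j) := by
  obtain ⟨i, hi, hqi⟩ := exists_eval_le_eval_grid_add_of_isMaxOn hM hmono hgap hS hwmax hmax
  obtain ⟨j, hj, hqj⟩ := exists_eval_le_eval_grid_add_of_isMaxOn (q := -q) hM hmono hgap
    (by simpa [iterate_derivative_neg] using hS) hwmin (by simpa using hmin.neg)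
  rw [eval_neg, eval_neg] at hqj
  exact ⟨i, hi, j, hj, by linarith⟩

end Grid

theorem discrete_vs_continuous_range_general (p : Polynomial ℝ) (k : ℝ)
    (hdeg : (p.natDegree : ℝ) ≤ Real.sqrt k)
    (M : ℕ) (hM : 1 ≤ M) (z : ℕ → ℝ)
    (hz1 : z 1 = 0) (hzM : z M = k)
    (hmono : ∀ i : ℕ, 1 ≤ i → i < M → z i < z (i + 1))
    (hgap : ∀ i : ℕ, 1 ≤ i → i < M → z (i + 1) - z i ≤ 1)
    (H : ℝ)
    (hmax : ∃ x ∈ Set.Icc 0 k, ∃ y ∈ Set.Icc 0 k, |p.eval x - p.eval y| ≥ H) :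
    ∃ i ∈ Finset.Icc 1 M, ∃ j ∈ Finset.Icc 1 M,
      |p.eval (z i) - p.eval (z j)| ≥ H / 2 := by
  subst hzM
  obtain ⟨x, hx, y, hy, hxy⟩ := hmax
  have hlen : (p.natDegree : ℝ) ^ 2 ≤ z M - z 1 := by
    rwa [hz1, sub_zero, ← Real.le_sqrt (Nat.cast_nonneg _) (hx.1.trans hx.2)]
  rw [← hz1] at hx hy
  obtain ⟨wmax, hwmax, hpmax⟩ := isCompact_Icc.exists_isMaxOn ⟨x, hx⟩ p.continuousOn
  obtain ⟨wmin, hwmin, hpmin⟩ := isCompact_Icc.exists_isMinOn ⟨x, hx⟩ p.continuousOn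
  have hrange : ∀ t ∈ Icc (z 1) (z M), p.eval t ∈ Icc (p.eval wmin) (p.eval wmax) :=
    fun t ht => ⟨hpmin ht, hpmax ht⟩
  have hS : ∀ t ∈ Icc (z 1) (z M),
      |(derivative^[2] p).eval t| ≤ 2 * (p.eval wmax - p.eval wmin) := by
    intro t ht
    have h := abs_iterate_derivative_two_eval_le natDegree_sub_C.le hlen (fun s hs => by
      rw [eval_sub, eval_C, ← Real.dist_eq, ← Metric.mem_closedBall, ← Real.Icc_eq_closedBall]
      exact hrange s hs) ht
    rw [iterate_derivative_sub, iterate_derivative_C two_pos, sub_zero] at h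
    linarith
  obtain ⟨i, hi, j, hj, hij⟩ := exists_eval_grid_sub_eval_grid_ge hM
    (fun i h1 h2 => (hmono i h1 h2).le) hgap hS hwmax hpmax hwmin hpmin
  have hosc : |p.eval x - p.eval y| ≤ p.eval wmax - p.eval wmin :=
    Real.dist_le_of_mem_Icc (hrange x hx) (hrange y hy)
  exact ⟨i, hi, j, hj, le_abs.mpr (Or.inl (by linarith))⟩

/-- Ehlich–Zeller / Rivlin–Cheney type bound for arbitrary points with gaps at
most 1: if `deg p ≤ √k`, the points `0 = z₁ < ⋯ < z_M = k` have consecutive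
gaps at most 1, and the variation of `p` on `[0,k]` is at least `H`, then the
variation of `p` on the points `z_i` is at least `H/2`. -/
theorem discrete_vs_continuous_range (p : Polynomial ℝ) (k : ℝ) (hk : 0 ≤ k)
    (hdeg : (p.natDegree : ℝ) ≤ Real.sqrt k)
    (M : ℕ) (hM : 1 ≤ M) (z : ℕ → ℝ)
    (hz1 : z 1 = 0) (hzM : z M = k)
    (hmono : ∀ i : ℕ, 1 ≤ i → i < M → z i < z (i + 1))
    (hgap : ∀ i : ℕ, 1 ≤ i → i < M → z (i + 1) - z i ≤ 1)
    (H : ℝ)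
    (hmax : ∃ x ∈ Set.Icc 0 k, ∃ y ∈ Set.Icc 0 k, |p.eval x - p.eval y| ≥ H) :
    ∃ i ∈ Finset.Icc 1 M, ∃ j ∈ Finset.Icc 1 M,
      |p.eval (z i) - p.eval (z j)| ≥ H / 2 :=
  discrete_vs_continuous_range_general p k hdeg M hM z hz1 hzM hmono hgap H hmax
end

section
/- Let c > 2 be a real constant, w a positive real, and d₁ a positive integer with c·d₁³ ≤ w/2 (so that x_{i,j} := c i² j² / (w·|i-j|·(i+j)) ≤ 1/2 for all distinct i,j ∈ {1,...,d₁}). Then for all i ∈ {1,...,d₁}: Σ_{j=1, j≠i}^{d₁} j²/(|j-i|·(j+i)) ≤ 2d₁ + 2√2·i·ln(i+1). -/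
/-!
Every term is at most `2` once `j ≥ 2i` (then `j² ≥ 4i²`), and at most `1 + i / (2|j - i|)` in
general. For `j ≤ 2i` the distances `|j - i|` run over `1, …, i` at most twice each, so these
extra parts add up to at most `i · H_i`, and `H_i ≤ 1 + log i ≤ 2 log (i + 1)` because
`(i + 1)² ≥ 4i > e · i`.
-/

open Finset Real

lemma sq_div_abs_sub_mul_add_le_two {x y : ℝ} (hy : 0 ≤ y) (hxy : 2 * y ≤ x) :
    x ^ 2 / (|x - y| * (x + y)) ≤ 2 := by
  rcases (show 0 ≤ x by linarith).eq_or_lt with rfl | hx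
  · simp
  rw [abs_of_pos (by linarith), div_le_iff₀ (by nlinarith)]
  nlinarith

lemma sq_div_abs_sub_mul_add_le_one_add {x y : ℝ} (hx : 0 ≤ x) (hy : 0 ≤ y) :
    x ^ 2 / (|x - y| * (x + y)) ≤ 1 + y / 2 * |x - y|⁻¹ := by
  rcases eq_or_ne x y with rfl | hne
  · simp
  have hd : 0 < |x - y| := abs_pos.mpr (sub_ne_zero.mpr hne)
  have hs : 0 < x + y := lt_of_le_of_ne (by positivity) fun h => hne (by linarith)
  rw [div_le_iff₀ (mul_pos hd hs), add_mul, one_mul,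
    show y / 2 * |x - y|⁻¹ * (|x - y| * (x + y)) = y * (x + y) / 2 by field_simp]
  rcases le_total x y with h | h
  · rw [abs_of_nonpos (by linarith)]; nlinarith
  · rw [abs_of_nonneg (by linarith)]; nlinarith

-- The term `j = i` is `0⁻¹ = 0`.
lemma sum_range_inv_abs_sub_eq_two_mul_harmonic (i : ℕ) :
    ∑ j ∈ range (2 * i + 1), |(j : ℝ) - i|⁻¹ = 2 * harmonic i := by
  have h_harm : (harmonic i : ℝ) = ∑ k ∈ range i, ((k : ℝ) + 1)⁻¹ := by
    simp [harmonic]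
  have h_below : ∑ j ∈ range i, |(j : ℝ) - i|⁻¹ = harmonic i := by
    rw [← sum_range_reflect, h_harm]
    refine sum_congr rfl fun k hk => ?_
    rw [mem_range] at hk
    rw [show ((i - 1 - k : ℕ) : ℝ) - i = -(k + 1) by
        rw [Nat.sub_sub, Nat.cast_sub (by omega : 1 + k ≤ i)]; push_cast; ring,
      abs_neg, abs_of_pos (by positivity)]
  have h_above : ∑ k ∈ range (i + 1), |((i + k : ℕ) : ℝ) - i|⁻¹ = harmonic i := by
    simp [sum_range_succ', h_harm, abs_of_nonneg]
  rw [show 2 * i + 1 = i + (i + 1) by ring, sum_range_add, h_below, h_above, two_mul]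

lemma sum_sq_div_abs_sub_mul_add_le (s : Finset ℕ) (i : ℕ) :
    ∑ j ∈ s, (j : ℝ) ^ 2 / (|(j : ℝ) - i| * (j + i)) ≤ 2 * #s + i * harmonic i := by
  have hterm : ∀ j ∈ s, (j : ℝ) ^ 2 / (|(j : ℝ) - i| * (j + i)) ≤
      2 + i / 2 * (if j ≤ 2 * i then |(j : ℝ) - i|⁻¹ else 0) := by
    intro j _
    split_ifs with hj
    · have := sq_div_abs_sub_mul_add_le_one_add (j.cast_nonneg (α := ℝ)) (i.cast_nonneg (α := ℝ))
      linarith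
    · have := sq_div_abs_sub_mul_add_le_two (x := j) (i.cast_nonneg (α := ℝ))
        (by exact_mod_cast (not_le.mp hj).le)
      linarith
  have hnear : s.filter (· ≤ 2 * i) ⊆ range (2 * i + 1) := fun j hj => by
    simp only [mem_filter, mem_range] at hj ⊢; omega
  calc ∑ j ∈ s, (j : ℝ) ^ 2 / (|(j : ℝ) - i| * (j + i))
      ≤ ∑ j ∈ s, (2 + i / 2 * (if j ≤ 2 * i then |(j : ℝ) - i|⁻¹ else 0)) := sum_le_sum hterm
    _ = 2 * #s + i / 2 * ∑ j ∈ s.filter (· ≤ 2 * i), |(j : ℝ) - i|⁻¹ := by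
      rw [sum_add_distrib, ← mul_sum, ← sum_filter, sum_const, nsmul_eq_mul, mul_comm]
    _ ≤ 2 * #s + i / 2 * ∑ j ∈ range (2 * i + 1), |(j : ℝ) - i|⁻¹ := by gcongr
    _ = 2 * #s + i * harmonic i := by
      rw [sum_range_inv_abs_sub_eq_two_mul_harmonic]; ring

lemma harmonic_le_two_mul_log_add_one (n : ℕ) : (harmonic n : ℝ) ≤ 2 * log (n + 1) := by
  rcases Nat.eq_zero_or_pos n with rfl | hn
  · simp
  have hn' : (1 : ℝ) ≤ n := by exact_mod_cast hn
  have hlog4 : 1 ≤ log 4 := by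
    rw [le_log_iff_exp_le (by norm_num)]
    exact (exp_one_lt_d9.trans (by norm_num)).le
  calc (harmonic n : ℝ) ≤ 1 + log n := harmonic_le_one_add_log n
    _ ≤ log 4 + log n := by gcongr
    _ = log (4 * n) := (log_mul (by norm_num) (by positivity)).symm
    _ ≤ log ((n + 1) ^ 2) := log_le_log (by positivity) (by nlinarith)
    _ = 2 * log (n + 1) := by rw [log_pow]; norm_num

theorem harmonic_sum_bound_general (d₁ : ℕ) (i : ℕ) :
    ∑ j ∈ Finset.Icc 1 d₁ \ {i},
        (j : ℝ) ^ 2 / (|(j : ℝ) - (i : ℝ)| * ((j : ℝ) + (i : ℝ)))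
      ≤ 2 * (d₁ : ℝ) + 2 * Real.sqrt 2 * (i : ℝ) * Real.log ((i : ℝ) + 1) := by
  have hcard : (#(Icc 1 d₁ \ {i}) : ℝ) ≤ d₁ := by
    exact_mod_cast (card_le_card sdiff_subset).trans (Nat.card_Icc 1 d₁).le
  have hharm : (harmonic i : ℝ) ≤ 2 * sqrt 2 * log (i + 1) := by
    have := harmonic_le_two_mul_log_add_one i
    have : 0 ≤ log ((i : ℝ) + 1) := log_nonneg (by linarith [i.cast_nonneg (α := ℝ)])
    nlinarith [one_lt_sqrt_two]
  calc _ ≤ 2 * (#(Icc 1 d₁ \ {i}) : ℝ) + i * harmonic i := sum_sq_div_abs_sub_mul_add_le _ i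
    _ ≤ 2 * d₁ + i * (2 * sqrt 2 * log (i + 1)) := by gcongr
    _ = _ := by ring

/-- Harmonic-type bound: if `c > 2`, `c d₁³ ≤ w/2`, then for each
`i ∈ {1,…,d₁}`, `∑_{j ≠ i} j²/(|j-i|(j+i)) ≤ 2 d₁ + 2√2 · i · ln(i+1)`. -/
theorem harmonic_sum_bound (c w : ℝ) (hc : 2 < c) (hw : 0 < w)
    (d₁ : ℕ) (hd : 0 < d₁) (hcd : c * (d₁ : ℝ) ^ 3 ≤ w / 2)
    (i : ℕ) (hi1 : 1 ≤ i) (hi2 : i ≤ d₁) :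
    ∑ j ∈ Finset.Icc 1 d₁ \ {i},
        (j : ℝ) ^ 2 / (|(j : ℝ) - (i : ℝ)| * ((j : ℝ) + (i : ℝ)))
      ≤ 2 * (d₁ : ℝ) + 2 * Real.sqrt 2 * (i : ℝ) * Real.log ((i : ℝ) + 1) :=
  harmonic_sum_bound_general d₁ i
end
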